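/- Let d ∈ B and Φ : Λ → Γ with Φ(Ø) = (d,d,d,…) and, if Ø ∈ Γ, Φ^{-1}(Ø) finitely defined. Then Φ is continuous and shift-commuting if and only if Φ is a sliding block code whose classes C_a (a ∈ L_Γ) are finite unions of generalized cylinders of Λ, such that (1) C_a is empty for all but finitely many a ∈ L_Γ, and (2) for each M ≥ 1 there is a finite set F_M ⊂ L_Λ with σ^{n−1}(Z(Ø,F_M) ∩ Λ) ⊆ C_d for all 1 ≤ n ≤ M. -/

import Mathlib

/-!
Two facts about the topology of `Σ_A` drive the proof. It is compact, being the continuous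
image of the Tychonoff product `(A ∪ {∞})^ℕ` of one-point compactifications of the discrete
alphabet under truncation at the first `∞`. And `σ` is continuous at every sequence not starting
with `õ`, so `σⁿ` is continuous at any `x` without `õ` before position `n`.

(⇐) The `n`-th letter of `Φ` is locally constant on `Λ`. If `x` has no `õ` before `n`, this is the
continuity of `σⁿ` at `x` together with the relative openness of the class of `σⁿ x` (a finite
union of cylinders, or for `õ` a finitely defined set around a point without `õ`). If `x` dies
at `L < n`, then `σᴸ y ∈ Z(Ø, F_{n+1})` for `y` near `x`, which puts `σⁿ y` in `C_d`.

(⇒) Take `C_a = {x ∈ Λ | (Φ x)₀ = a}`. Continuity, and for `õ` the finite definedness of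
`Φ⁻¹(Ø)`, make `x ↦ (Φ x)₀` locally constant on the compact set `Λ`: it takes finitely many
values, and its fibres are compact and relatively open, hence finite unions of cylinders. The
sets `F_M` come from continuity at `Ø`, whose neighbourhoods are the `Z(Ø, F)`.
-/

namespace OTW

/-- The Ott-Tomforde-Willis full shift `Σ_A`: sequences over `A ∪ {õ}` (with `õ = none`)
such that once the empty letter `õ` appears, it repeats forever. -/
@[ext]
structure FullShift (A : Type*) where
  val : ℕ → Option A
  tail : ∀ i, val i = none → val (i + 1) = none

variable {A B : Type*}

/-- The shift map `σ`. -/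
def shiftMap (x : FullShift A) : FullShift A :=
  ⟨fun i => x.val (i + 1), fun i hi => x.tail (i + 1) hi⟩

/-- The empty sequence `Ø`. -/
def emptySeq : FullShift A :=
  ⟨fun _ => none, fun _ _ => rfl⟩

theorem val_none_mono (x : FullShift A) :
    ∀ {k m : ℕ}, k ≤ m → x.val k = none → x.val m = none := by
  intro k m h hk
  induction m, h using Nat.le_induction with
  | base => exact hk
  | succ m hm ih => exact x.tail m ih

/-- The finite sequence determined by a word `w : List A`. -/
def finSeq (w : List A) : FullShift A where
  val i := (w.drop i).head?
  tail := by
    intro i hi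
    rw [List.head?_eq_none_iff] at hi ⊢
    rw [List.drop_eq_nil_iff] at hi ⊢
    omega

/-- Generalized cylinder `Z(w, F)`. -/
def Zcyl (w : List A) (F : Finset A) : Set (FullShift A) :=
  {x | (∀ i : Fin w.length, x.val i = some (w.get i)) ∧ ∀ a ∈ F, x.val w.length ≠ some a}

/-- The topology on `Σ_A` generated by the generalized cylinders. -/
instance : TopologicalSpace (FullShift A) :=
  TopologicalSpace.generateFrom {S | ∃ (w : List A) (F : Finset A), S = Zcyl w F}

/-- The letters `L_Λ` used by sequences of `Λ`. -/
def letters (Λ : Set (FullShift A)) : Set A :=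
  {a | ∃ x ∈ Λ, ∃ i, x.val i = some a}

/-- `w` is a (fully lettered) block appearing in some sequence of `Λ`. -/
def IsBlock (Λ : Set (FullShift A)) (w : List A) : Prop :=
  ∃ x ∈ Λ, ∃ n, ∀ i : Fin w.length, x.val (n + i) = some (w.get i)

/-- Ott-Tomforde-Willis shift space: closed, shift invariant, with the
infinite extension property. -/
def IsShiftSpace (Λ : Set (FullShift A)) : Prop :=
  IsClosed Λ ∧ (∀ x ∈ Λ, shiftMap x ∈ Λ) ∧
    (emptySeq ∈ Λ ↔ (letters Λ).Infinite) ∧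
    (∀ w : List A, w ≠ [] → (finSeq w ∈ Λ ↔ {b : A | IsBlock Λ (w ++ [b])}.Infinite))

/-- `x` begins with the block `b` (a word over the extended alphabet `A ∪ {õ}`). -/
def Prefixed (x : FullShift A) (b : List (Option A)) : Prop :=
  ∀ i : Fin b.length, x.val i = b.get i

/-- `(P, Q)` is a representation of `C` as a finitely defined set in `Λ`:
membership in `C` is witnessed by an initial block in `P`, and membership in the
complement by an initial block in `Q`. -/
def FDRep (Λ C : Set (FullShift A)) (P Q : Set (List (Option A))) : Prop :=
  (∀ b ∈ P, b ≠ []) ∧ (∀ b ∈ Q, b ≠ []) ∧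
    C = {x ∈ Λ | ∃ b ∈ P, Prefixed x b} ∧
    Λ \ C = {x ∈ Λ | ∃ b ∈ Q, Prefixed x b}

/-- `C` is a finitely defined set in `Λ`. -/
def FinitelyDefinedIn (Λ C : Set (FullShift A)) : Prop :=
  ∃ P Q, FDRep Λ C P Q

/-- `S` is a finite (possibly empty) union of generalized cylinders of `Λ`. -/
def IsFinUnionCyl (Λ S : Set (FullShift A)) : Prop :=
  ∃ (n : ℕ) (w : Fin n → List A) (F : Fin n → Finset A),
    S = Λ ∩ ⋃ i, Zcyl (w i) (F i)

/-- `Φ` is the sliding block code determined by the partition `{C_a}` of `Λ` into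
finitely defined sets, with `C_õ` shift invariant. -/
def IsSBCWith (Λ : Set (FullShift A)) (Φ : FullShift A → FullShift B)
    (C : Option B → Set (FullShift A)) : Prop :=
  (∀ a, C a ⊆ Λ) ∧ (∀ x ∈ Λ, ∃! a, x ∈ C a) ∧
    (∀ a, FinitelyDefinedIn Λ (C a)) ∧
    (∀ x ∈ C none, shiftMap x ∈ C none) ∧
    (∀ x ∈ Λ, ∀ n : ℕ, shiftMap^[n] x ∈ C ((Φ x).val n))

/-- Sliding block code. -/
def IsSlidingBlockCode (Λ : Set (FullShift A)) (Φ : FullShift A → FullShift B) : Prop :=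
  ∃ C, IsSBCWith Λ Φ C

/-- Row-finite shift: every letter has a finite follower set. -/
def RowFinite (Λ : Set (FullShift A)) : Prop :=
  ∀ a ∈ letters Λ, {b : A | IsBlock Λ [a, b]}.Finite

/-- The `M`-th higher block code `Ξ^(M)`. -/
noncomputable def higherBlock (M : ℕ) (x : FullShift A) : FullShift (Fin M → A) where
  val i := if h : ∀ j : Fin M, (x.val (i + j)).isSome then
      some (fun j => (x.val (i + j)).get (h j)) else none
  tail := by
    intro i hi
    try dsimp only at hi ⊢
    have h1 : ¬ ∀ j : Fin M, (x.val (i + j)).isSome := by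
      intro h
      rw [dif_pos h] at hi
      exact Option.some_ne_none _ hi
    push_neg at h1
    obtain ⟨j, hj⟩ := h1
    have hjn : x.val (i + j) = none := Option.not_isSome_iff_eq_none.mp hj
    have hM : (0 : ℕ) < M := j.pos
    rw [dif_neg]
    intro h2
    have hsome := h2 ⟨M - 1, by omega⟩
    have hnone : x.val (i + 1 + ((⟨M - 1, by omega⟩ : Fin M) : ℕ)) = none := by
      apply val_none_mono x ?_ hjn
      have := j.isLt
      simp only [Fin.val_mk]
      omega
    rw [hnone] at hsome
    simp at hsome


open Filter Topology TopologicalSpace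

section LocallyConstantOn
variable {X ι : Type*} [TopologicalSpace X] {s : Set X} {g : X → ι}

lemma _root_.isClosed_setOf_eq_of_eventually_eq (hs : IsClosed s)
    (hg : ∀ x ∈ s, ∀ᶠ y in 𝓝[s] x, g y = g x) (i : ι) : IsClosed {x ∈ s | g x = i} := by
  refine isClosed_of_closure_subset fun z hz => ?_
  have hzs : z ∈ s := hs.closure_subset (closure_mono (Set.sep_subset s _) hz)
  have hfreq : ∃ᶠ y in 𝓝[s] z, g y = i := by
    rw [frequently_nhdsWithin_iff]
    exact (mem_closure_iff_frequently.1 hz).mono fun y hy => ⟨hy.2, hy.1⟩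
  obtain ⟨y, hyi, hyz⟩ := (hfreq.and_eventually (hg z hzs)).exists
  exact ⟨hzs, hyz ▸ hyi⟩

lemma _root_.IsCompact.finite_image_of_eventually_eq (hs : IsCompact s)
    (hg : ∀ x ∈ s, ∀ᶠ y in 𝓝[s] x, g y = g x) : (g '' s).Finite := by
  obtain ⟨t, -, hcover⟩ := hs.elim_nhdsWithin_subcover (fun x => {y | g y = g x}) hg
  refine (t.finite_toSet.image g).subset ?_
  rintro _ ⟨y, hy, rfl⟩
  obtain ⟨x, hx, hyx⟩ := Set.mem_iUnion₂.1 (hcover hy)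
  exact ⟨x, hx, hyx.symm⟩

end LocallyConstantOn

section Shift
variable {A : Type*}

@[simp] lemma shiftMap_val (x : FullShift A) (i : ℕ) : (shiftMap x).val i = x.val (i + 1) := rfl

lemma iterate_shiftMap_val (x : FullShift A) (n i : ℕ) :
    (shiftMap^[n] x).val i = x.val (n + i) := by
  induction n generalizing x with
  | zero => simp
  | succ n ih => rw [Function.iterate_succ_apply, ih, shiftMap_val, Nat.add_right_comm]

lemma iterate_shiftMap_eq_emptySeq {x : FullShift A} {n : ℕ} (h : x.val n = none) :
    shiftMap^[n] x = emptySeq :=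
  FullShift.ext <| funext fun i => by
    rw [iterate_shiftMap_val]
    exact val_none_mono x (Nat.le_add_right n i) h

lemma exists_iterate_shiftMap_eq_emptySeq {x : FullShift A} {k : ℕ} (h : x.val k = none) :
    ∃ L ≤ k, (∀ j < L, x.val j ≠ none) ∧ shiftMap^[L] x = emptySeq :=
  have hex : ∃ j, x.val j = none := ⟨k, h⟩
  ⟨Nat.find hex, Nat.find_min' hex h, fun _ hj => Nat.find_min hex hj,
    iterate_shiftMap_eq_emptySeq (Nat.find_spec hex)⟩

lemma val_ne_none_of_mapsTo {C : Set (FullShift A)} (hC : Set.MapsTo shiftMap C C)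
    (hO : emptySeq ∉ C) {x : FullShift A} (hx : x ∈ C) (k : ℕ) : x.val k ≠ none := fun hk =>
  hO (iterate_shiftMap_eq_emptySeq hk ▸ hC.iterate k hx)

end Shift

section Cylinders
variable {A : Type*}

lemma isOpen_Zcyl (w : List A) (F : Finset A) : IsOpen (Zcyl w F) :=
  isOpen_generateFrom_of_mem ⟨w, F, rfl⟩

lemma mem_Zcyl_iff_of_mem {w : List A} {F : Finset A} {x y : FullShift A} (hx : x ∈ Zcyl w F) :
    y ∈ Zcyl w F ↔ (∀ k < w.length, y.val k = x.val k) ∧ ∀ a ∈ F, y.val w.length ≠ some a :=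
  ⟨fun hy => ⟨fun k hk => (hy.1 ⟨k, hk⟩).trans (hx.1 ⟨k, hk⟩).symm, hy.2⟩,
    fun hy => ⟨fun i => (hy.1 i i.isLt).trans (hx.1 i), hy.2⟩⟩

lemma mem_Zcyl_cons_iff {a : A} {w : List A} {F : Finset A} {y : FullShift A} :
    y ∈ Zcyl (a :: w) F ↔ y.val 0 = some a ∧ shiftMap y ∈ Zcyl w F := by
  simp [Zcyl, Fin.forall_fin_succ, and_assoc]

lemma emptySeq_mem_Zcyl_iff {w : List A} {F : Finset A} :
    (emptySeq : FullShift A) ∈ Zcyl w F ↔ w = [] := by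
  cases w with
  | nil => simp [Zcyl, emptySeq]
  | cons a w => simp [mem_Zcyl_cons_iff, emptySeq]

lemma Zcyl_subset_of_length_lt {x : FullShift A} {w₁ w₂ : List A} {F₁ F₂ : Finset A}
    (h₁ : x ∈ Zcyl w₁ F₁) (h₂ : x ∈ Zcyl w₂ F₂) (hlt : w₁.length < w₂.length) :
    Zcyl w₂ F₂ ⊆ Zcyl w₁ F₁ := by
  intro y hy
  rw [mem_Zcyl_iff_of_mem h₂] at hy
  rw [mem_Zcyl_iff_of_mem h₁, hy.1 _ hlt]
  exact ⟨fun k hk => hy.1 k (hk.trans hlt), h₁.2⟩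

lemma Zcyl_union_subset_of_length_eq [DecidableEq A] {x : FullShift A} {w₁ w₂ : List A}
    {F₁ F₂ : Finset A}
    (h₁ : x ∈ Zcyl w₁ F₁) (h₂ : x ∈ Zcyl w₂ F₂) (heq : w₁.length = w₂.length) :
    x ∈ Zcyl w₁ (F₁ ∪ F₂) ∧ Zcyl w₁ (F₁ ∪ F₂) ⊆ Zcyl w₁ F₁ ∩ Zcyl w₂ F₂ := by
  have hx : x ∈ Zcyl w₁ (F₁ ∪ F₂) :=
    ⟨h₁.1, fun a ha => (Finset.mem_union.1 ha).elim (h₁.2 a) (heq ▸ h₂.2 a)⟩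
  refine ⟨hx, fun y hy => ?_⟩
  rw [mem_Zcyl_iff_of_mem hx] at hy
  rw [Set.mem_inter_iff, mem_Zcyl_iff_of_mem h₁, mem_Zcyl_iff_of_mem h₂, ← heq]
  exact ⟨⟨hy.1, fun a ha => hy.2 a (Finset.mem_union_left _ ha)⟩,
    ⟨hy.1, fun a ha => hy.2 a (Finset.mem_union_right _ ha)⟩⟩

lemma isTopologicalBasis_Zcyl :
    IsTopologicalBasis {S : Set (FullShift A) | ∃ w F, S = Zcyl w F} where
  exists_subset_inter := by
    classical
    rintro _ ⟨w₁, F₁, rfl⟩ _ ⟨w₂, F₂, rfl⟩ x ⟨h₁, h₂⟩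
    rcases lt_trichotomy w₁.length w₂.length with hlt | heq | hgt
    · exact ⟨_, ⟨w₂, F₂, rfl⟩, h₂, fun y hy => ⟨Zcyl_subset_of_length_lt h₁ h₂ hlt hy, hy⟩⟩
    · obtain ⟨hx, hsub⟩ := Zcyl_union_subset_of_length_eq h₁ h₂ heq
      exact ⟨_, ⟨w₁, F₁ ∪ F₂, rfl⟩, hx, hsub⟩
    · exact ⟨_, ⟨w₁, F₁, rfl⟩, h₁, fun y hy => ⟨hy, Zcyl_subset_of_length_lt h₂ h₁ hgt hy⟩⟩
  sUnion_eq := Set.eq_univ_of_forall fun x => ⟨Zcyl [] ∅, ⟨[], ∅, rfl⟩, by simp [Zcyl]⟩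
  eq_generateFrom := rfl

lemma exists_Zcyl_nil_subset_of_mem_nhds {s : Set (FullShift A)} (hs : s ∈ 𝓝 emptySeq) :
    ∃ F : Finset A, Zcyl [] F ⊆ s := by
  obtain ⟨_, ⟨w, F, rfl⟩, hO, hsub⟩ := isTopologicalBasis_Zcyl.mem_nhds_iff.1 hs
  rw [emptySeq_mem_Zcyl_iff.1 hO] at hsub
  exact ⟨F, hsub⟩

lemma tendsto_nhds_of_forall_eventually_val_eq {X : Type*} {l : Filter X}
    {f : X → FullShift A} {z : FullShift A} (h : ∀ n, ∀ᶠ y in l, (f y).val n = z.val n) :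
    Tendsto f l (𝓝 z) := by
  refine isTopologicalBasis_Zcyl.nhds_hasBasis.tendsto_right_iff.2 ?_
  rintro _ ⟨⟨w, F, rfl⟩, hz⟩
  filter_upwards [eventually_all_finset (Finset.range (w.length + 1)) |>.2 fun n _ => h n]
    with y hy
  rw [mem_Zcyl_iff_of_mem hz, hy w.length (by simp)]
  exact ⟨fun k hk => hy k (Finset.mem_range.2 (by omega)), hz.2⟩

end Cylinders

section Compactness
variable {A : Type*}

def truncate (x : ℕ → Option A) : FullShift A where
  val i := if ∀ j < i, (x j).isSome then x i else none
  tail i hi := if_neg fun h => by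
    rw [if_pos fun j hj => h j (by omega)] at hi
    simpa [hi] using h i (by omega)

lemma truncate_val (x : FullShift A) : truncate x.val = x := by
  ext i : 2
  refine ite_eq_left_iff.2 fun h => ?_
  push Not at h
  obtain ⟨j, hj, hxj⟩ := h
  exact (val_none_mono x hj.le (Option.not_isSome_iff_eq_none.1 hxj)).symm

lemma truncate_val_eq_some_iff {x : ℕ → Option A} {i : ℕ} {a : A} :
    (truncate x).val i = some a ↔ (∀ j < i, (x j).isSome) ∧ x i = some a := by
  simp only [truncate]
  split_ifs with h
  · exact ⟨fun hi => ⟨h, hi⟩, And.right⟩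
  · simp [h]

lemma truncate_mem_Zcyl_iff {x : ℕ → Option A} {w : List A} {F : Finset A} :
    truncate x ∈ Zcyl w F ↔
      (∀ i : Fin w.length, x i = some (w.get i)) ∧ ∀ a ∈ F, x w.length ≠ some a := by
  have hprefix : (∀ i : Fin w.length, (truncate x).val i = some (w.get i)) ↔
      ∀ i : Fin w.length, x i = some (w.get i) := by
    simp only [truncate_val_eq_some_iff]
    refine ⟨fun h i => (h i).2, fun h i => ⟨fun j hj => ?_, h i⟩⟩
    simp [h ⟨j, hj.trans i.isLt⟩]
  rw [Zcyl, Set.mem_ofPred_eq, hprefix]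
  refine and_congr_right fun h => ?_
  rw [show (truncate x).val w.length = x w.length from if_pos fun j hj => by simp [h ⟨j, hj⟩]]

lemma continuous_truncate [TopologicalSpace A] [DiscreteTopology A] :
    Continuous (fun x : ℕ → OnePoint A => truncate x) := by
  refine continuous_generateFrom_iff.2 ?_
  rintro _ ⟨w, F, rfl⟩
  have hpre : (fun x : ℕ → OnePoint A => truncate x) ⁻¹' Zcyl w F =
      (⋂ i : Fin w.length, {x | x i ∈ ({(w.get i : OnePoint A)} : Set (OnePoint A))}) ∩
        ⋂ a ∈ F, {x | x w.length ∈ ({(a : OnePoint A)} : Set (OnePoint A))ᶜ} :=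
    Set.ext fun x => truncate_mem_Zcyl_iff.trans <| by
      simp only [List.get_eq_getElem, Set.mem_singleton_iff, Set.mem_compl_iff,
        Set.mem_inter_iff, Set.mem_iInter, Set.mem_ofPred_eq]
      rfl
  have hcoord : ∀ (n : ℕ) {s : Set (OnePoint A)}, IsOpen s →
      IsOpen {x : ℕ → OnePoint A | x n ∈ s} := fun n _ hs => hs.preimage (continuous_apply n)
  rw [hpre]
  refine (isOpen_iInter_of_finite fun i => hcoord _ ?_).inter
    (isOpen_biInter_finset fun a _ => hcoord _ isOpen_compl_singleton)
  simpa using OnePoint.isOpen_image_coe.2 (isOpen_discrete {w.get i})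

instance : CompactSpace (FullShift A) := by
  let : TopologicalSpace A := ⊥
  have : DiscreteTopology A := ⟨rfl⟩
  have hsurj : Function.Surjective (fun x : ℕ → OnePoint A => truncate x) :=
    fun y => ⟨y.val, truncate_val y⟩
  exact ⟨hsurj.range_eq ▸ isCompact_range continuous_truncate⟩

end Compactness

section Continuity
variable {A : Type*}

lemma continuousAt_shiftMap {x : FullShift A} (hx : x.val 0 ≠ none) : ContinuousAt shiftMap x := by
  obtain ⟨a, ha⟩ := Option.ne_none_iff_exists'.1 hx
  refine isTopologicalBasis_Zcyl.nhds_hasBasis.tendsto_right_iff.2 ?_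
  rintro _ ⟨⟨w, F, rfl⟩, hσx⟩
  filter_upwards [(isOpen_Zcyl (a :: w) F).mem_nhds (mem_Zcyl_cons_iff.2 ⟨ha, hσx⟩)] with y hy
  exact (mem_Zcyl_cons_iff.1 hy).2

lemma continuousAt_iterate_shiftMap {x : FullShift A} {n : ℕ} (hx : ∀ k < n, x.val k ≠ none) :
    ContinuousAt shiftMap^[n] x := by
  induction n generalizing x with
  | zero => exact continuousAt_id
  | succ n ih =>
    rw [Function.iterate_succ]
    exact (ih fun k hk => hx (k + 1) (by omega)).comp (continuousAt_shiftMap (hx 0 (by omega)))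

lemma isOpen_setOf_val_eq_some (n : ℕ) (a : A) : IsOpen {z : FullShift A | z.val n = some a} := by
  induction n with
  | zero => simpa [Zcyl] using isOpen_Zcyl [a] ∅
  | succ n ih =>
    refine isOpen_iff_mem_nhds.2 fun z hz => ?_
    have h0 : z.val 0 ≠ none := fun h => by simp [val_none_mono z (Nat.zero_le _) h] at hz
    exact continuousAt_shiftMap h0 (ih.mem_nhds hz)

lemma eventually_val_eq {z : FullShift A} {n : ℕ} (h : z.val n ≠ none) :
    ∀ᶠ y in 𝓝 z, y.val n = z.val n := by
  obtain ⟨a, ha⟩ := Option.ne_none_iff_exists'.1 h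
  rw [ha]
  exact (isOpen_setOf_val_eq_some n a).mem_nhds ha

lemma FinitelyDefinedIn.eventually_mem {Λ C : Set (FullShift A)} (hC : FinitelyDefinedIn Λ C)
    {z : FullShift A} (hz : z ∈ C) (halive : ∀ k, z.val k ≠ none) : ∀ᶠ y in 𝓝[Λ] z, y ∈ C := by
  obtain ⟨P, Q, -, -, hCP, -⟩ := hC
  rw [hCP] at hz ⊢
  obtain ⟨-, b, hb, hzb⟩ := hz
  have hprefix : ∀ᶠ y in 𝓝 z, Prefixed y b := by
    filter_upwards [eventually_all.2 fun i : Fin b.length => eventually_val_eq (halive i)]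
      with y hy i
    rw [hy i]
    exact hzb i
  filter_upwards [self_mem_nhdsWithin, mem_nhdsWithin_of_mem_nhds hprefix] with y hyΛ hyb
  exact ⟨hyΛ, b, hb, hyb⟩

lemma IsFinUnionCyl.eventually_mem {Λ S : Set (FullShift A)} (hS : IsFinUnionCyl Λ S)
    {z : FullShift A} (hz : z ∈ S) : ∀ᶠ y in 𝓝[Λ] z, y ∈ S := by
  obtain ⟨n, w, F, rfl⟩ := hS
  exact inter_mem self_mem_nhdsWithin <| mem_nhdsWithin_of_mem_nhds <|
    (isOpen_iUnion fun i => isOpen_Zcyl (w i) (F i)).mem_nhds hz.2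

end Continuity

section SlidingBlockCode
variable {A B : Type*} {Λ : Set (FullShift A)} {Φ : FullShift A → FullShift B}
  {C : Option B → Set (FullShift A)}

lemma IsSBCWith.val_eq (hC : IsSBCWith Λ Φ C) (hσ : Set.MapsTo shiftMap Λ Λ) {x : FullShift A}
    (hx : x ∈ Λ) {n : ℕ} {a : Option B} (h : shiftMap^[n] x ∈ C a) : (Φ x).val n = a :=
  (hC.2.1 _ (hσ.iterate n hx)).unique (hC.2.2.2.2 x hx n) h

lemma IsSBCWith.map_shiftMap (hC : IsSBCWith Λ Φ C) (hσ : Set.MapsTo shiftMap Λ Λ)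
    {x : FullShift A} (hx : x ∈ Λ) : Φ (shiftMap x) = shiftMap (Φ x) :=
  FullShift.ext <| funext fun n => hC.val_eq hσ (hσ hx) (hC.2.2.2.2 x hx (n + 1))

lemma IsSBCWith.emptySeq_mem (hC : IsSBCWith Λ Φ C) (hO : emptySeq ∈ Λ) {d : B}
    (hd : ∀ n, (Φ emptySeq).val n = some d) : emptySeq ∈ C (some d) :=
  hd 0 ▸ hC.2.2.2.2 _ hO 0

lemma IsSBCWith.eventually_iterate_mem (hC : IsSBCWith Λ Φ C) (hσ : Set.MapsTo shiftMap Λ Λ)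
    (hO : emptySeq ∈ Λ) {d : B} (hd : ∀ n, (Φ emptySeq).val n = some d)
    (hcyl : ∀ b : B, IsFinUnionCyl Λ (C (some b))) {x : FullShift A} (hx : x ∈ Λ) {n : ℕ}
    (halive : ∀ k < n, x.val k ≠ none) : ∀ᶠ y in 𝓝[Λ] x, shiftMap^[n] y ∈ C ((Φ x).val n) := by
  have hT : Tendsto shiftMap^[n] (𝓝[Λ] x) (𝓝[Λ] (shiftMap^[n] x)) :=
    (continuousAt_iterate_shiftMap halive).continuousWithinAt.tendsto_nhdsWithin (hσ.iterate n)
  refine hT.eventually ?_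
  have hmem := hC.2.2.2.2 x hx n
  cases ha : (Φ x).val n with
  | none =>
    rw [ha] at hmem
    have hO' : emptySeq ∉ C none := fun h => by
      cases (hC.2.1 _ hO).unique h (hC.emptySeq_mem hO hd)
    exact (hC.2.2.1 none).eventually_mem hmem (val_ne_none_of_mapsTo hC.2.2.2.1 hO' hmem)
  | some b =>
    rw [ha] at hmem
    exact (hcyl b).eventually_mem hmem

lemma eventually_iterate_mem_of_val_eq_none (hσ : Set.MapsTo shiftMap Λ Λ) {D : Set (FullShift A)}
    (hF : ∀ M, ∃ F : Finset A, ∀ n < M, ∀ x ∈ Zcyl [] F ∩ Λ, shiftMap^[n] x ∈ D)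
    {x : FullShift A} {k n : ℕ} (hkn : k ≤ n) (hxk : x.val k = none) :
    ∀ᶠ y in 𝓝[Λ] x, shiftMap^[n] y ∈ D := by
  obtain ⟨L, hLk, halive, hL⟩ := exists_iterate_shiftMap_eq_emptySeq hxk
  obtain ⟨F, hF⟩ := hF (n + 1)
  have hnear : ∀ᶠ y in 𝓝 x, shiftMap^[L] y ∈ Zcyl [] F :=
    continuousAt_iterate_shiftMap halive <|
      (isOpen_Zcyl [] F).mem_nhds (hL ▸ emptySeq_mem_Zcyl_iff.2 rfl)
  filter_upwards [self_mem_nhdsWithin, mem_nhdsWithin_of_mem_nhds hnear] with y hyΛ hy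
  have := hF (n - L) (by omega) _ ⟨hy, hσ.iterate L hyΛ⟩
  rwa [← Function.iterate_add_apply, Nat.sub_add_cancel (hLk.trans hkn)] at this

lemma IsSBCWith.continuousOn (hC : IsSBCWith Λ Φ C) (hσ : Set.MapsTo shiftMap Λ Λ)
    (hO : emptySeq ∈ Λ) {d : B} (hd : ∀ n, (Φ emptySeq).val n = some d)
    (hcyl : ∀ b : B, IsFinUnionCyl Λ (C (some b)))
    (hF : ∀ M, ∃ F : Finset A, ∀ n < M, ∀ x ∈ Zcyl [] F ∩ Λ, shiftMap^[n] x ∈ C (some d)) :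
    ContinuousOn Φ Λ := by
  refine fun x hx => tendsto_nhds_of_forall_eventually_val_eq fun n => ?_
  by_cases halive : ∀ k < n, x.val k ≠ none
  · filter_upwards [self_mem_nhdsWithin, hC.eventually_iterate_mem hσ hO hd hcyl hx halive]
      with y hyΛ hy using hC.val_eq hσ hyΛ hy
  · push Not at halive
    obtain ⟨k, hkn, hxk⟩ := halive
    have hΦx : (Φ x).val n = some d := hC.val_eq hσ hx <| by
      rw [iterate_shiftMap_eq_emptySeq (val_none_mono x hkn.le hxk)]
      exact hC.emptySeq_mem hO hd
    filter_upwards [self_mem_nhdsWithin,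
      eventually_iterate_mem_of_val_eq_none hσ hF hkn.le hxk] with y hyΛ hy
    rw [hΦx]
    exact hC.val_eq hσ hyΛ hy

end SlidingBlockCode


section FinitelyDefined
variable {A : Type*} {Λ : Set (FullShift A)}

def PrefixDefinedIn (Λ C : Set (FullShift A)) : Prop :=
  ∃ P : Set (List (Option A)), (∀ b ∈ P, b ≠ []) ∧ C = {x ∈ Λ | ∃ b ∈ P, Prefixed x b}

lemma prefixed_map_some_append_iff {x : FullShift A} {w : List A} {o : Option A} :
    Prefixed x (w.map some ++ [o]) ↔
      (∀ i : Fin w.length, x.val i = some (w.get i)) ∧ x.val w.length = o := by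
  simp only [Prefixed, Fin.forall_iff, List.length_append, List.length_map, List.length_singleton,
    Nat.lt_add_one_iff_lt_or_eq, List.get_eq_getElem]
  refine ⟨fun h => ⟨fun i hi => ?_, ?_⟩, fun ⟨h, ho⟩ i hi => ?_⟩
  · simpa [List.getElem_append_left, hi] using h i (.inl hi)
  · simpa using h w.length (.inr rfl)
  · rcases hi with hi | rfl
    · simpa [List.getElem_append_left, hi] using h i hi
    · simpa using ho

lemma mem_Zcyl_iff_exists_prefixed {x : FullShift A} {w : List A} {F : Finset A} :
    x ∈ Zcyl w F ↔ ∃ o : Option A, (∀ a ∈ F, o ≠ some a) ∧ Prefixed x (w.map some ++ [o]) := by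
  simp only [prefixed_map_some_append_iff]
  exact ⟨fun h => ⟨_, h.2, h.1, rfl⟩, fun ⟨_, hF, h, ho⟩ => ⟨h, ho ▸ hF⟩⟩

lemma IsFinUnionCyl.prefixDefinedIn {S : Set (FullShift A)} (hS : IsFinUnionCyl Λ S) :
    PrefixDefinedIn Λ S := by
  obtain ⟨n, w, F, rfl⟩ := hS
  refine ⟨{b | ∃ i o, (∀ a ∈ F i, o ≠ some a) ∧ b = (w i).map some ++ [o]}, ?_, ?_⟩
  · rintro _ ⟨i, o, -, rfl⟩
    simp
  · ext x
    simp only [Set.mem_inter_iff, Set.mem_iUnion, mem_Zcyl_iff_exists_prefixed]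
    aesop

lemma FinitelyDefinedIn.prefixDefinedIn {C : Set (FullShift A)} (hC : FinitelyDefinedIn Λ C) :
    PrefixDefinedIn Λ C :=
  let ⟨P, _, hP, _, hCP, _⟩ := hC
  ⟨P, hP, hCP⟩

lemma finitelyDefinedIn_of_prefixDefinedIn {ι : Type*} {C : ι → Set (FullShift A)}
    (huniq : ∀ x ∈ Λ, ∃! i, x ∈ C i) (hC : ∀ i, PrefixDefinedIn Λ (C i)) (i : ι) :
    FinitelyDefinedIn Λ (C i) := by
  choose P hPne hCP using hC
  refine ⟨P i, {b | ∃ j ≠ i, b ∈ P j}, hPne i, fun b ⟨j, _, hb⟩ => hPne j b hb, hCP i, ?_⟩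
  ext x
  constructor
  · rintro ⟨hxΛ, hxi⟩
    obtain ⟨j, hxj, -⟩ := huniq x hxΛ
    have hj : j ≠ i := fun h => hxi (h ▸ hxj)
    rw [hCP j] at hxj
    obtain ⟨-, b, hb, hxb⟩ := hxj
    exact ⟨hxΛ, b, ⟨j, hj, hb⟩, hxb⟩
  · rintro ⟨hxΛ, b, ⟨j, hj, hb⟩, hxb⟩
    have hxj : x ∈ C j := (hCP j).symm ▸ ⟨hxΛ, b, hb, hxb⟩
    exact ⟨hxΛ, fun hxi => hj ((huniq x hxΛ).unique hxj hxi)⟩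

lemma isFinUnionCyl_of_isCompact {S : Set (FullShift A)} (hS : IsCompact S) (hSΛ : S ⊆ Λ)
    (h : ∀ x ∈ S, ∀ᶠ y in 𝓝[Λ] x, y ∈ S) : IsFinUnionCyl Λ S := by
  have hcyl : ∀ x ∈ S, ∃ w F, x ∈ Zcyl w F ∧ Λ ∩ Zcyl w F ⊆ S := by
    intro x hx
    obtain ⟨u, hu, huS⟩ := mem_nhdsWithin_iff_exists_mem_nhds_inter.1 (h x hx)
    obtain ⟨_, ⟨w, F, rfl⟩, hxw, hwu⟩ := isTopologicalBasis_Zcyl.mem_nhds_iff.1 hu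
    exact ⟨w, F, hxw, fun y hy => huS ⟨hwu hy.2, hy.1⟩⟩
  choose! w F hxw hwS using hcyl
  obtain ⟨t, htS, hcover⟩ := hS.elim_nhds_subcover (fun x => Zcyl (w x) (F x))
    fun x hx => (isOpen_Zcyl _ _).mem_nhds (hxw x hx)
  refine ⟨t.card, fun i => w (t.equivFin.symm i), fun i => F (t.equivFin.symm i), ?_⟩
  have hunion : ⋃ i, Zcyl (w (t.equivFin.symm i)) (F (t.equivFin.symm i)) =
      ⋃ x ∈ t, Zcyl (w x) (F x) := by
    ext y
    simp only [Set.mem_iUnion]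
    exact ⟨fun ⟨i, hi⟩ => ⟨_, (t.equivFin.symm i).2, hi⟩,
      fun ⟨x, hx, hy⟩ => ⟨t.equivFin ⟨x, hx⟩, by simpa using hy⟩⟩
  rw [hunion]
  refine subset_antisymm (fun x hx => ⟨hSΛ hx, hcover hx⟩) fun y ⟨hyΛ, hy⟩ => ?_
  obtain ⟨x, hx, hyx⟩ := Set.mem_iUnion₂.1 hy
  exact hwS x (htS x hx) ⟨hyΛ, hyx⟩

lemma Zcyl_antitone (w : List A) : Antitone (Zcyl w) :=
  fun _ _ hFG _ hx => ⟨hx.1, fun a ha => hx.2 a (hFG ha)⟩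

lemma exists_subset_letters_Zcyl_nil_inter_subset (Λ : Set (FullShift A)) (F : Finset A) :
    ∃ G : Finset A, (G : Set A) ⊆ letters Λ ∧ Zcyl [] G ∩ Λ ⊆ Zcyl [] F := by
  classical
  refine ⟨F.filter (· ∈ letters Λ), fun a ha => (Finset.mem_filter.1 ha).2,
    fun x ⟨hx, hxΛ⟩ => ⟨fun i => i.elim0, fun a ha hxa => ?_⟩⟩
  exact hx.2 a (Finset.mem_filter.2 ⟨ha, x, hxΛ, 0, hxa⟩) hxa

end FinitelyDefined

section CodeClass
variable {A B : Type*} {Λ : Set (FullShift A)} {Φ : FullShift A → FullShift B}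

def codeClass (Λ : Set (FullShift A)) (Φ : FullShift A → FullShift B) (a : Option B) :
    Set (FullShift A) :=
  {x ∈ Λ | (Φ x).val 0 = a}

lemma existsUnique_mem_codeClass {x : FullShift A} (hx : x ∈ Λ) :
    ∃! a, x ∈ codeClass Λ Φ a :=
  ⟨_, ⟨hx, rfl⟩, fun _ ha => ha.2.symm⟩

lemma val_zero_eq_none_iff {y : FullShift B} : y.val 0 = none ↔ y = emptySeq :=
  ⟨iterate_shiftMap_eq_emptySeq (n := 0), fun h => h ▸ rfl⟩

lemma codeClass_none : codeClass Λ Φ none = Λ ∩ Φ ⁻¹' {emptySeq} :=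
  Set.ext fun _ => and_congr_right fun _ => val_zero_eq_none_iff

lemma prefixDefinedIn_codeClass_none {Γ : Set (FullShift B)} (hmap : Set.MapsTo Φ Λ Γ)
    (hfd : emptySeq ∈ Γ → FinitelyDefinedIn Λ (Λ ∩ Φ ⁻¹' {emptySeq})) :
    PrefixDefinedIn Λ (codeClass Λ Φ none) := by
  by_cases hΓ : emptySeq ∈ Γ
  · rw [codeClass_none]
    exact (hfd hΓ).prefixDefinedIn
  · refine ⟨∅, by simp, Set.ext fun x => ?_⟩
    simp only [codeClass, Set.mem_ofPred_eq, Set.mem_empty_iff_false, false_and, exists_false,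
      and_false, iff_false, not_and]
    exact fun hx h0 => hΓ (val_zero_eq_none_iff.1 h0 ▸ hmap hx)

lemma exists_Zcyl_nil_forall_val_eq (hcont : ContinuousWithinAt Φ Λ emptySeq) {n : ℕ} {d : B}
    (hd : (Φ emptySeq).val n = some d) :
    ∃ F : Finset A, ∀ y ∈ Zcyl [] F ∩ Λ, (Φ y).val n = some d := by
  obtain ⟨u, hu, huΛ⟩ := mem_nhdsWithin_iff_exists_mem_nhds_inter.1 <|
    hcont ((isOpen_setOf_val_eq_some n d).mem_nhds hd)
  obtain ⟨F, hF⟩ := exists_Zcyl_nil_subset_of_mem_nhds hu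
  exact ⟨F, fun y hy => huΛ ⟨hF hy.1, hy.2⟩⟩

lemma isFinUnionCyl_codeClass (hΛ : IsClosed Λ)
    (hloc : ∀ x ∈ Λ, ∀ᶠ y in 𝓝[Λ] x, (Φ y).val 0 = (Φ x).val 0) (a : Option B) :
    IsFinUnionCyl Λ (codeClass Λ Φ a) :=
  isFinUnionCyl_of_isCompact (isClosed_setOf_eq_of_eventually_eq hΛ hloc a).isCompact
    (Set.sep_subset _ _) fun x hx => by
      filter_upwards [self_mem_nhdsWithin, hloc x hx.1] with y hyΛ hy
      exact ⟨hyΛ, hy.trans hx.2⟩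

lemma finite_setOf_codeClass_nonempty (hΛ : IsClosed Λ)
    (hloc : ∀ x ∈ Λ, ∀ᶠ y in 𝓝[Λ] x, (Φ y).val 0 = (Φ x).val 0) :
    {a | (codeClass Λ Φ a).Nonempty}.Finite :=
  (hΛ.isCompact.finite_image_of_eventually_eq hloc).subset fun _ ⟨x, hx⟩ => ⟨x, hx⟩

lemma finitelyDefinedIn_codeClass {Γ : Set (FullShift B)} (hΛ : IsClosed Λ)
    (hloc : ∀ x ∈ Λ, ∀ᶠ y in 𝓝[Λ] x, (Φ y).val 0 = (Φ x).val 0) (hmap : Set.MapsTo Φ Λ Γ)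
    (hfd : emptySeq ∈ Γ → FinitelyDefinedIn Λ (Λ ∩ Φ ⁻¹' {emptySeq})) (a : Option B) :
    FinitelyDefinedIn Λ (codeClass Λ Φ a) :=
  finitelyDefinedIn_of_prefixDefinedIn (fun _ => existsUnique_mem_codeClass)
    (fun | some b => (isFinUnionCyl_codeClass hΛ hloc (some b)).prefixDefinedIn
         | none => prefixDefinedIn_codeClass_none hmap hfd) a

variable (hσ : Set.MapsTo shiftMap Λ Λ) (hcomm : ∀ x ∈ Λ, Φ (shiftMap x) = shiftMap (Φ x))
include hσ hcomm

lemma map_iterate_shiftMap {x : FullShift A} (hx : x ∈ Λ) (n : ℕ) :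
    Φ (shiftMap^[n] x) = shiftMap^[n] (Φ x) := by
  induction n generalizing x with
  | zero => rfl
  | succ n ih =>
    rw [Function.iterate_succ_apply, ih (hσ hx), hcomm x hx, ← Function.iterate_succ_apply]

lemma iterate_shiftMap_mem_codeClass {x : FullShift A} (hx : x ∈ Λ) (n : ℕ) :
    shiftMap^[n] x ∈ codeClass Λ Φ ((Φ x).val n) := by
  refine ⟨hσ.iterate n hx, ?_⟩
  rw [map_iterate_shiftMap hσ hcomm hx, iterate_shiftMap_val, Nat.add_zero]

lemma mapsTo_codeClass_none : Set.MapsTo shiftMap (codeClass Λ Φ none) (codeClass Λ Φ none) :=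
  fun x ⟨hxΛ, hx0⟩ => ⟨hσ hxΛ, by rw [hcomm x hxΛ, shiftMap_val]; exact (Φ x).tail 0 hx0⟩

lemma isSBCWith_codeClass (hFD : ∀ a, FinitelyDefinedIn Λ (codeClass Λ Φ a)) :
    IsSBCWith Λ Φ (codeClass Λ Φ) :=
  ⟨fun _ _ hx => hx.1, fun _ => existsUnique_mem_codeClass, hFD,
    mapsTo_codeClass_none hσ hcomm, fun _ hx n => iterate_shiftMap_mem_codeClass hσ hcomm hx n⟩

lemma eventually_val_zero_eq {Γ : Set (FullShift B)} (hmap : Set.MapsTo Φ Λ Γ)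
    (hcont : ContinuousOn Φ Λ) (hd : (Φ emptySeq).val 0 ≠ none)
    (hfd : emptySeq ∈ Γ → FinitelyDefinedIn Λ (Λ ∩ Φ ⁻¹' {emptySeq}))
    {x : FullShift A} (hx : x ∈ Λ) : ∀ᶠ y in 𝓝[Λ] x, (Φ y).val 0 = (Φ x).val 0 := by
  cases ha : (Φ x).val 0 with
  | some b => exact hcont x hx ((isOpen_setOf_val_eq_some 0 b).mem_nhds ha)
  | none =>
    -- The orbit of `x` stays in `Φ⁻¹(Ø)`, which misses `Ø`, so `x` has no `õ` and the
    -- finite definedness of `Φ⁻¹(Ø)` only reads letters that are fixed near `x`.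
    have hxC : x ∈ codeClass Λ Φ none := ⟨hx, ha⟩
    have hΓ : emptySeq ∈ Γ := val_zero_eq_none_iff.1 ha ▸ hmap hx
    have halive := val_ne_none_of_mapsTo (mapsTo_codeClass_none hσ hcomm) (fun h => hd h.2) hxC
    rw [codeClass_none] at hxC
    filter_upwards [(hfd hΓ).eventually_mem hxC halive] with y hy
    exact val_zero_eq_none_iff.2 hy.2

lemma exists_letters_forall_iterate_mem_codeClass (hcont : ContinuousWithinAt Φ Λ emptySeq)
    {d : B} (hd : ∀ n, (Φ emptySeq).val n = some d) (M : ℕ) :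
    ∃ F : Finset A, (F : Set A) ⊆ letters Λ ∧
      ∀ n < M, ∀ x ∈ Zcyl [] F ∩ Λ, shiftMap^[n] x ∈ codeClass Λ Φ (some d) := by
  classical
  choose F hF using fun n => exists_Zcyl_nil_forall_val_eq hcont (hd n)
  obtain ⟨G, hGΛ, hG⟩ := exists_subset_letters_Zcyl_nil_inter_subset Λ ((Finset.range M).biUnion F)
  refine ⟨G, hGΛ, fun n hn x hx => ?_⟩
  have hxF : x ∈ Zcyl [] (F n) :=
    Zcyl_antitone [] (Finset.subset_biUnion_of_mem F (Finset.mem_range.2 hn)) (hG hx)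
  simpa [hF n x ⟨hxF, hx.2⟩] using iterate_shiftMap_mem_codeClass hσ hcomm hx.2 n

end CodeClass

theorem curtis_hedlund_lyndon_two_general {A B : Type*}
    (Λ : Set (FullShift A)) (Γ : Set (FullShift B))
    (hΛ : IsShiftSpace Λ)
    (Φ : FullShift A → FullShift B) (hmap : Set.MapsTo Φ Λ Γ)
    (d : B) (hO : emptySeq ∈ Λ) (hd : ∀ n, (Φ emptySeq).val n = some d)
    (hfd : emptySeq ∈ Γ → FinitelyDefinedIn Λ (Λ ∩ Φ ⁻¹' {emptySeq})) :
    (ContinuousOn Φ Λ ∧ ∀ x ∈ Λ, Φ (shiftMap x) = shiftMap (Φ x)) ↔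
      ∃ C : Option B → Set (FullShift A), IsSBCWith Λ Φ C ∧
        (∀ b : B, IsFinUnionCyl Λ (C (some b))) ∧
        {b : B | (C (some b)).Nonempty}.Finite ∧
        (∀ M : ℕ, ∃ F : Finset A, (F : Set A) ⊆ letters Λ ∧
          ∀ n < M, ∀ x ∈ Zcyl ([] : List A) F ∩ Λ, shiftMap^[n] x ∈ C (some d)) := by
  have hσ : Set.MapsTo shiftMap Λ Λ := hΛ.2.1
  constructor
  · rintro ⟨hcont, hcomm⟩
    have hloc : ∀ x ∈ Λ, ∀ᶠ y in 𝓝[Λ] x, (Φ y).val 0 = (Φ x).val 0 := fun x hx =>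
      eventually_val_zero_eq hσ hcomm hmap hcont (by simp [hd 0]) hfd hx
    exact ⟨codeClass Λ Φ,
      isSBCWith_codeClass hσ hcomm (finitelyDefinedIn_codeClass hΛ.1 hloc hmap hfd),
      fun b => isFinUnionCyl_codeClass hΛ.1 hloc (some b),
      (finite_setOf_codeClass_nonempty hΛ.1 hloc).preimage (f := some)
        (Option.some_injective B).injOn,
      exists_letters_forall_iterate_mem_codeClass hσ hcomm (hcont _ hO) hd⟩
  · rintro ⟨C, hC, hcyl, -, hF⟩
    exact ⟨hC.continuousOn hσ hO hd hcyl fun M => (hF M).imp fun _ h => h.2,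
      fun x hx => hC.map_shiftMap hσ hx⟩

/-- Curtis-Hedlund-Lyndon theorem, second form. Assuming
`Φ(Ø) = (d,d,d,…)` and (when `Ø ∈ Γ`) `Φ⁻¹(Ø)` finitely defined, `Φ` is continuous
and shift commuting iff it is a sliding block code whose classes `C_a` are finite
unions of generalized cylinders of `Λ`, only finitely many classes are nonempty, and
for each `M` there is a finite `F_M ⊆ L_Λ` with `σ^{n}(Z(Ø,F_M) ∩ Λ) ⊆ C_d` for all
`n < M`. -/
theorem curtis_hedlund_lyndon_two {A B : Type*} [Countable A] [Infinite A] [Countable B] [Infinite B]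
    (Λ : Set (FullShift A)) (Γ : Set (FullShift B))
    (hΛ : IsShiftSpace Λ) (hΓ : IsShiftSpace Γ)
    (Φ : FullShift A → FullShift B) (hmap : Set.MapsTo Φ Λ Γ)
    (d : B) (hO : emptySeq ∈ Λ) (hd : ∀ n, (Φ emptySeq).val n = some d)
    (hfd : emptySeq ∈ Γ → FinitelyDefinedIn Λ (Λ ∩ Φ ⁻¹' {emptySeq})) :
    (ContinuousOn Φ Λ ∧ ∀ x ∈ Λ, Φ (shiftMap x) = shiftMap (Φ x)) ↔
      ∃ C : Option B → Set (FullShift A), IsSBCWith Λ Φ C ∧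
        (∀ b : B, IsFinUnionCyl Λ (C (some b))) ∧
        {b : B | (C (some b)).Nonempty}.Finite ∧
        (∀ M : ℕ, ∃ F : Finset A, (F : Set A) ⊆ letters Λ ∧
          ∀ n < M, ∀ x ∈ Zcyl ([] : List A) F ∩ Λ, shiftMap^[n] x ∈ C (some d)) :=
  curtis_hedlund_lyndon_two_general Λ Γ hΛ Φ hmap d hO hd hfd

end OTW
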